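/- Let a1, a2, a3, λ > 0. Then ∫_0^∞ f_GE(z2; a2, λ) · ( ∫_0^{z2} f_GE(z1; a1, λ) · (1−e^{−λ z1})^{a3} dz1 ) dz2 = a1 a2 / ( (a1+a3)(a1+a2+a3) ). (For independent random variables Z1 ~ GE(a1, λ), Z2 ~ GE(a2, λ), Z3 ~ GE(a3, λ), this is P(Z3 < Z1 < Z2); it yields the E-step probability u1 = α1/(α1+α3) in the EM algorithm.) -/

import Mathlib

open Real Filter MeasureTheory intervalIntegral

/-- The generalized exponential pdf `f_GE(x; α, λ) = α λ e^{-λx} (1-e^{-λx})^{α-1}`. -/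
noncomputable def fGE (x α lam : ℝ) : ℝ :=
  α * lam * Real.exp (-lam * x) * (1 - Real.exp (-lam * x)) ^ (α - 1)

/-!
`F_GE(x; α, λ)^c · f_GE(x; b, λ) = b / (b + c) · f_GE(x; b + c, λ)`, since both sides are
derivatives of powers of the same function `1 - e^{-λx}`. Applying this once to the inner integral
and once more to the outer one turns the integrand into a multiple of the density of
`GE(a1 + a2 + a3, λ)`, which integrates to `1` over `(0, ∞)`.
-/

open Topology

noncomputable def geCdf (x α lam : ℝ) : ℝ :=
  (1 - Real.exp (-lam * x)) ^ α

lemma one_sub_exp_neg_mul_pos {lam x : ℝ} (hlam : 0 < lam) (hx : 0 < x) :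
    0 < 1 - Real.exp (-lam * x) := by
  have : -lam * x < 0 := by nlinarith
  linarith [Real.exp_lt_one_iff.2 this]

lemma one_sub_exp_neg_mul_nonneg {lam x : ℝ} (hlam : 0 ≤ lam) (hx : 0 ≤ x) :
    0 ≤ 1 - Real.exp (-lam * x) := by
  have : -lam * x ≤ 0 := by nlinarith
  linarith [Real.exp_le_one_iff.2 this]

lemma fGE_nonneg {x α lam : ℝ} (hx : 0 ≤ x) (hα : 0 ≤ α) (hlam : 0 ≤ lam) : 0 ≤ fGE x α lam := by
  have := one_sub_exp_neg_mul_nonneg hlam hx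
  unfold fGE
  positivity

lemma continuous_geCdf {α : ℝ} (lam : ℝ) (hα : 0 ≤ α) : Continuous (geCdf · α lam) :=
  (continuous_const.sub (continuous_const.mul continuous_id).rexp).rpow_const fun _ => Or.inr hα

lemma hasDerivAt_geCdf {x lam : ℝ} (α : ℝ) (hlam : 0 < lam) (hx : 0 < x) :
    HasDerivAt (geCdf · α lam) (fGE x α lam) x := by
  have hbase : HasDerivAt (fun y => 1 - Real.exp (-lam * y)) (lam * Real.exp (-lam * x)) x := by
    simpa [mul_comm] using (((hasDerivAt_id x).const_mul (-lam)).exp).const_sub 1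
  exact (hbase.rpow_const (Or.inl (one_sub_exp_neg_mul_pos hlam hx).ne')).congr_deriv
    (by unfold fGE; ring)

lemma tendsto_geCdf_atTop {lam : ℝ} (α : ℝ) (hlam : 0 < lam) :
    Tendsto (geCdf · α lam) atTop (𝓝 1) := by
  have hexp : Tendsto (fun t => Real.exp (-lam * t)) atTop (𝓝 0) :=
    tendsto_exp_atBot.comp (tendsto_id.const_mul_atTop_of_neg (neg_lt_zero.2 hlam))
  have := (hexp.const_sub 1).rpow_const (p := α) (Or.inl (by simp))
  rwa [sub_zero, one_rpow] at this

lemma fGE_mul_geCdf {x lam : ℝ} (b c : ℝ) (hbc : b + c ≠ 0) (hlam : 0 < lam) (hx : 0 < x) :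
    fGE x b lam * geCdf x c lam = b / (b + c) * fGE x (b + c) lam := by
  unfold fGE geCdf
  rw [show b + c - 1 = b - 1 + c by ring, rpow_add (one_sub_exp_neg_mul_pos hlam hx)]
  field_simp

lemma integral_fGE {t α lam : ℝ} (ht : 0 ≤ t) (hα : 0 < α) (hlam : 0 < lam) :
    ∫ x in (0 : ℝ)..t, fGE x α lam = geCdf t α lam := by
  have hcont := (continuous_geCdf lam hα.le).continuousOn (s := Set.Icc 0 t)
  have hderiv : ∀ x ∈ Set.Ioo 0 t, HasDerivAt (geCdf · α lam) (fGE x α lam) x :=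
    fun x hx => hasDerivAt_geCdf α hlam hx.1
  have hint : IntervalIntegrable (fGE · α lam) volume 0 t :=
    (intervalIntegrable_iff_integrableOn_Ioc_of_le ht).2 <|
      integrableOn_deriv_of_nonneg hcont hderiv fun x hx => fGE_nonneg hx.1.le hα.le hlam.le
  rw [integral_eq_sub_of_hasDerivAt_of_le ht hcont hderiv hint]
  simp [geCdf, zero_rpow hα.ne']

lemma integral_Ioi_fGE {α lam : ℝ} (hα : 0 < α) (hlam : 0 < lam) :
    ∫ x in Set.Ioi 0, fGE x α lam = 1 := by
  rw [integral_Ioi_of_hasDerivAt_of_nonneg (continuous_geCdf lam hα.le).continuousWithinAt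
    (fun x hx => hasDerivAt_geCdf α hlam hx) (fun x hx => fGE_nonneg (le_of_lt hx) hα.le hlam.le)
    (tendsto_geCdf_atTop α hlam)]
  simp [geCdf, zero_rpow hα.ne']

/-- For independent `Z1 ~ GE(a1,λ)`, `Z2 ~ GE(a2,λ)`, `Z3 ~ GE(a3,λ)`:
`P(Z3 < Z1 < Z2) = ∫_0^∞ f_GE(z2; a2, λ) (∫_0^{z2} f_GE(z1; a1, λ)(1-e^{-λ z1})^{a3} dz1) dz2
  = a1 a2 / ((a1+a3)(a1+a2+a3))`. -/
theorem stmt_16 (a1 a2 a3 lam : ℝ) (ha1 : 0 < a1) (ha2 : 0 < a2) (ha3 : 0 < a3)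
    (hlam : 0 < lam) :
    ∫ z2 in Set.Ioi (0 : ℝ),
        fGE z2 a2 lam *
          ∫ z1 in (0 : ℝ)..z2, fGE z1 a1 lam * (1 - Real.exp (-lam * z1)) ^ a3 =
      a1 * a2 / ((a1 + a3) * (a1 + a2 + a3)) := by
  have hinner : ∀ z2 ∈ Set.Ioi (0 : ℝ),
      fGE z2 a2 lam * ∫ z1 in (0 : ℝ)..z2, fGE z1 a1 lam * (1 - Real.exp (-lam * z1)) ^ a3 =
        a1 / (a1 + a3) * (a2 / (a1 + a2 + a3)) * fGE z2 (a1 + a2 + a3) lam := by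
    intro z2 (hz2 : 0 < z2)
    have hintegrand : ∀ z1 ∈ Set.uIoc 0 z2, fGE z1 a1 lam * (1 - Real.exp (-lam * z1)) ^ a3 =
        a1 / (a1 + a3) * fGE z1 (a1 + a3) lam := fun z1 hz1 =>
      fGE_mul_geCdf a1 a3 (by positivity) hlam (Set.uIoc_of_le hz2.le ▸ hz1).1
    rw [integral_congr_ae (ae_of_all _ hintegrand), intervalIntegral.integral_const_mul,
      integral_fGE hz2.le (by positivity) hlam, mul_left_comm,
      fGE_mul_geCdf a2 (a1 + a3) (by positivity) hlam hz2, ← mul_assoc,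
      show a2 + (a1 + a3) = a1 + a2 + a3 by ring]
  rw [setIntegral_congr_fun measurableSet_Ioi hinner, MeasureTheory.integral_const_mul,
    integral_Ioi_fGE (by positivity) hlam]
  field_simp
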